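/- arXiv:2005.08204 — 4 statements merged into one kernel-verified Lean document; each statement's English description precedes it below -/
import Mathlib

section
/- Let X ~ Beta(a, b) and Y ~ Beta(a', b') with a, b, a', b' > 0. Then Y is stochastically dominated by X (i.e., the CDF of X is pointwise at most the CDF of Y on [0,1]) if and only if a ≥ a' and b ≤ b'. -/
/-!
If `a' ≤ a` and `b ≤ b'`, the likelihood ratio `y ^ (a - a') * (1 - y) ^ (b - b')` of the two
Beta densities is increasing on `(0, 1)`. Taking `c` to be its value at `x`, the first density is
below `c` times the second on `(0, x)` and above it on `(x, 1)`, which orders the two CDFs at `x`.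

Conversely, near `0` the Beta(a, b) CDF is of exact order `x ^ a`, so if `a < a'` the Beta(a', b')
CDF is eventually smaller, contradicting dominance. The reflection `y ↦ 1 - y` exchanges the
parameters and reverses dominance, which turns the same argument into `b ≤ b'`.
-/

open MeasureTheory Set

/-- Unnormalised incomplete Beta integral: `∫_0^{min x 1} y^{a-1} (1-y)^{b-1} dy`. -/
noncomputable def betaInt (a b x : ℝ) : ℝ :=
  ∫ y in Set.Ioo (0 : ℝ) (min x 1), y ^ (a - 1) * (1 - y) ^ (b - 1)

/-- The CDF of the Beta(a, b) distribution. -/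
noncomputable def betaCDF (a b x : ℝ) : ℝ :=
  betaInt a b x / betaInt a b 1

open Filter Topology intervalIntegral ProbabilityTheory

lemma integral_div_integral_le_of_crossing {f g : ℝ → ℝ} {u x v c : ℝ} (hux : u ≤ x)
    (hxv : x ≤ v) (hf : IntervalIntegrable f volume u v) (hg : IntervalIntegrable g volume u v)
    (hg_nonneg : ∀ y ∈ Icc u v, 0 ≤ g y)
    (hleft : ∀ y ∈ Ioo u x, f y ≤ c * g y) (hright : ∀ y ∈ Ioo x v, c * g y ≤ f y)
    (hf_pos : 0 < ∫ y in u..v, f y) (hg_pos : 0 < ∫ y in u..v, g y) :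
    (∫ y in u..x, f y) / (∫ y in u..v, f y) ≤ (∫ y in u..x, g y) / (∫ y in u..v, g y) := by
  have hx : x ∈ uIcc u v := mem_uIcc_of_le hux hxv
  have hf₁ := hf.mono_set (uIcc_subset_uIcc_left hx)
  have hf₂ := hf.mono_set (uIcc_subset_uIcc_right hx)
  have hg₁ := hg.mono_set (uIcc_subset_uIcc_left hx)
  have hg₂ := hg.mono_set (uIcc_subset_uIcc_right hx)
  have hA : (∫ y in u..x, f y) ≤ c * ∫ y in u..x, g y := by
    rw [← intervalIntegral.integral_const_mul]
    exact integral_mono_on_of_le_Ioo hux hf₁ (hg₁.const_mul c) hleft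
  have hB : c * (∫ y in x..v, g y) ≤ ∫ y in x..v, f y := by
    rw [← intervalIntegral.integral_const_mul]
    exact integral_mono_on_of_le_Ioo hxv (hg₂.const_mul c) hf₂ hright
  have hA' : 0 ≤ ∫ y in u..x, g y :=
    integral_nonneg hux fun y hy => hg_nonneg y ⟨hy.1, hy.2.trans hxv⟩
  have hB' : 0 ≤ ∫ y in x..v, g y :=
    integral_nonneg hxv fun y hy => hg_nonneg y ⟨hux.trans hy.1, hy.2⟩
  rw [div_le_div_iff₀ hf_pos hg_pos, ← integral_add_adjacent_intervals hf₁ hf₂,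
    ← integral_add_adjacent_intervals hg₁ hg₂]
  nlinarith [mul_le_mul_of_nonneg_right hA hB', mul_le_mul_of_nonneg_left hB hA']

noncomputable def betaIntegrand (a b y : ℝ) : ℝ := y ^ (a - 1) * (1 - y) ^ (b - 1)

section

variable {a b y : ℝ}

lemma betaIntegrand_nonneg (hy0 : 0 ≤ y) (hy1 : y ≤ 1) : 0 ≤ betaIntegrand a b y :=
  mul_nonneg (Real.rpow_nonneg hy0 _) (Real.rpow_nonneg (sub_nonneg.2 hy1) _)

lemma betaIntegrand_pos (hy0 : 0 < y) (hy1 : y < 1) : 0 < betaIntegrand a b y :=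
  mul_pos (Real.rpow_pos_of_pos hy0 _) (Real.rpow_pos_of_pos (sub_pos.2 hy1) _)

lemma betaIntegrand_eq_mul (a' b' : ℝ) (hy0 : 0 < y) (hy1 : y < 1) :
    betaIntegrand a b y = y ^ (a - a') * (1 - y) ^ (b - b') * betaIntegrand a' b' y := by
  have h : betaIntegrand a b y
      = y ^ (a - a' + (a' - 1)) * (1 - y) ^ (b - b' + (b' - 1)) := by
    simp only [betaIntegrand, sub_add_sub_cancel]
  rw [h, Real.rpow_add hy0, Real.rpow_add (sub_pos.2 hy1), betaIntegrand]
  ring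

lemma betaIntegrand_one_sub (a b y : ℝ) : betaIntegrand a b (1 - y) = betaIntegrand b a y := by
  rw [betaIntegrand, betaIntegrand, sub_sub_cancel, mul_comm]

lemma integrable_betaPDFReal (ha : 0 < a) (hb : 0 < b) : Integrable (betaPDFReal a b) := by
  have h_nonneg : 0 ≤ᵐ[volume] betaPDFReal a b := ae_of_all _ fun y => by
    by_cases hy : 0 < y ∧ y < 1
    · exact (betaPDFReal_pos hy.1 hy.2 ha hb).le
    · simp [betaPDFReal, hy]
  refine ⟨(stronglyMeasurable_betaPDFReal a b).aestronglyMeasurable, ?_⟩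
  rw [hasFiniteIntegral_iff_ofReal h_nonneg]
  exact (lintegral_betaPDF_eq_one ha hb).trans_lt ENNReal.one_lt_top

lemma intervalIntegrable_betaIntegrand (ha : 0 < a) (hb : 0 < b) {u v : ℝ} (hu : u ∈ Icc 0 1)
    (hv : v ∈ Icc 0 1) : IntervalIntegrable (betaIntegrand a b) volume u v := by
  refine IntervalIntegrable.mono_set ?_ (uIcc_subset_uIcc (Icc_subset_uIcc hu) (Icc_subset_uIcc hv))
  rw [intervalIntegrable_iff_integrableOn_Ioo_of_le zero_le_one]
  refine ((integrable_betaPDFReal ha hb).const_mul (beta a b)).integrableOn.congr_fun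
    (fun y hy => ?_) measurableSet_Ioo
  simp only [betaPDFReal, if_pos (mem_Ioo.1 hy), betaIntegrand, one_div, mul_assoc,
    mul_inv_cancel_left₀ (beta_pos ha hb).ne']

lemma integral_betaIntegrand_pos (ha : 0 < a) (hb : 0 < b) {x : ℝ} (hx0 : 0 < x) (hx1 : x ≤ 1) :
    0 < ∫ y in 0..x, betaIntegrand a b y :=
  intervalIntegral_pos_of_pos_on
    (intervalIntegrable_betaIntegrand ha hb ⟨le_rfl, zero_le_one⟩ ⟨hx0.le, hx1⟩)
    (fun _ hy => betaIntegrand_pos hy.1 (hy.2.trans_le hx1)) hx0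

lemma integral_betaIntegrand_swap (a b x : ℝ) :
    ∫ y in 0..1 - x, betaIntegrand b a y = ∫ y in x..1, betaIntegrand a b y := by
  simp_rw [← betaIntegrand_one_sub a b]
  rw [intervalIntegral.integral_comp_sub_left (betaIntegrand a b) 1, sub_sub_cancel, sub_zero]

lemma monotoneOn_rpow_mul_one_sub_rpow {p q : ℝ} (hp : 0 ≤ p) (hq : q ≤ 0) :
    MonotoneOn (fun y : ℝ => y ^ p * (1 - y) ^ q) (Ico 0 1) := fun _ hy _ hz hyz =>
  mul_le_mul (Real.rpow_le_rpow hy.1 hyz hp)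
    (Real.rpow_le_rpow_of_nonpos (sub_pos.2 hz.2) (sub_le_sub_left hyz 1) hq)
    (Real.rpow_nonneg (sub_pos.2 hy.2).le _) (Real.rpow_nonneg hz.1 _)

lemma one_sub_rpow_le_max (q : ℝ) (hy0 : 0 ≤ y) (hy : y ≤ 1 / 2) :
    (1 - y) ^ q ≤ max 1 ((1 / 2 : ℝ) ^ q) := by
  rcases le_or_gt 0 q with hq | hq
  · exact le_max_of_le_left (Real.rpow_le_one (by linarith) (by linarith) hq)
  · exact le_max_of_le_right (Real.rpow_le_rpow_of_nonpos (by norm_num) (by linarith) hq.le)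

lemma betaInt_eq_integral {x : ℝ} (hx0 : 0 ≤ x) (hx1 : x ≤ 1) :
    betaInt a b x = ∫ y in 0..x, betaIntegrand a b y := by
  rw [betaInt, min_eq_left hx1, integral_of_le hx0, integral_Ioc_eq_integral_Ioo]
  rfl

lemma betaCDF_eq {x : ℝ} (hx0 : 0 ≤ x) (hx1 : x ≤ 1) :
    betaCDF a b x = (∫ y in 0..x, betaIntegrand a b y) / ∫ y in 0..1, betaIntegrand a b y := by
  rw [betaCDF, betaInt_eq_integral hx0 hx1, betaInt_eq_integral zero_le_one le_rfl]

lemma betaCDF_zero (a b : ℝ) : betaCDF a b 0 = 0 := by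
  simp [betaCDF_eq le_rfl zero_le_one]

lemma betaCDF_one (ha : 0 < a) (hb : 0 < b) : betaCDF a b 1 = 1 := by
  rw [betaCDF_eq zero_le_one le_rfl, div_self (integral_betaIntegrand_pos ha hb one_pos le_rfl).ne']

lemma betaCDF_pos (ha : 0 < a) (hb : 0 < b) {x : ℝ} (hx0 : 0 < x) (hx1 : x ≤ 1) :
    0 < betaCDF a b x := by
  rw [betaCDF_eq hx0.le hx1]
  exact div_pos (integral_betaIntegrand_pos ha hb hx0 hx1)
    (integral_betaIntegrand_pos ha hb one_pos le_rfl)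

lemma betaCDF_one_sub (ha : 0 < a) (hb : 0 < b) {x : ℝ} (hx : x ∈ Icc 0 1) :
    betaCDF b a (1 - x) = 1 - betaCDF a b x := by
  have htotal := integral_betaIntegrand_swap a b 0
  rw [sub_zero] at htotal
  have hpos := integral_betaIntegrand_pos ha hb one_pos le_rfl
  rw [betaCDF_eq (sub_nonneg.2 hx.2) (sub_le_self 1 hx.1), betaCDF_eq hx.1 hx.2, htotal,
    integral_betaIntegrand_swap, eq_sub_iff_add_eq, ← add_div, div_eq_one_iff_eq hpos.ne',
    add_comm, integral_add_adjacent_intervals]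
  · exact intervalIntegrable_betaIntegrand ha hb ⟨le_rfl, zero_le_one⟩ hx
  · exact intervalIntegrable_betaIntegrand ha hb hx ⟨zero_le_one, le_rfl⟩

variable {a' b' : ℝ}

lemma betaCDF_le_betaCDF (ha : 0 < a) (hb : 0 < b) (ha' : 0 < a') (hb' : 0 < b') (haa : a' ≤ a)
    (hbb : b ≤ b') {x : ℝ} (hx : x ∈ Icc 0 1) : betaCDF a b x ≤ betaCDF a' b' x := by
  obtain rfl | hx0 := hx.1.eq_or_lt
  · rw [betaCDF_zero, betaCDF_zero]
  obtain rfl | hx1 := hx.2.eq_or_lt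
  · rw [betaCDF_one ha hb, betaCDF_one ha' hb']
  have hmono := monotoneOn_rpow_mul_one_sub_rpow (sub_nonneg.2 haa) (sub_nonpos.2 hbb)
  rw [betaCDF_eq hx.1 hx.2, betaCDF_eq hx.1 hx.2]
  refine integral_div_integral_le_of_crossing (c := x ^ (a - a') * (1 - x) ^ (b - b')) hx.1 hx.2
    (intervalIntegrable_betaIntegrand ha hb ⟨le_rfl, zero_le_one⟩ ⟨zero_le_one, le_rfl⟩)
    (intervalIntegrable_betaIntegrand ha' hb' ⟨le_rfl, zero_le_one⟩ ⟨zero_le_one, le_rfl⟩)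
    (fun y hy => betaIntegrand_nonneg hy.1 hy.2) (fun y hy => ?_) (fun y hy => ?_)
    (integral_betaIntegrand_pos ha hb one_pos le_rfl)
    (integral_betaIntegrand_pos ha' hb' one_pos le_rfl)
  · rw [betaIntegrand_eq_mul (a := a) (b := b) a' b' hy.1 (hy.2.trans hx1)]
    exact mul_le_mul_of_nonneg_right (hmono ⟨hy.1.le, hy.2.trans hx1⟩ ⟨hx0.le, hx1⟩ hy.2.le)
      (betaIntegrand_nonneg hy.1.le (hy.2.trans hx1).le)
  · rw [betaIntegrand_eq_mul (a := a) (b := b) a' b' (hx0.trans hy.1) hy.2]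
    exact mul_le_mul_of_nonneg_right (hmono ⟨hx0.le, hx1⟩ ⟨(hx0.trans hy.1).le, hy.2⟩ hy.1.le)
      (betaIntegrand_nonneg (hx0.trans hy.1).le hy.2.le)

lemma integral_betaIntegrand_le_rpow_mul (ha : 0 < a) (hb : 0 < b) (ha' : 0 < a') (hb' : 0 < b')
    (haa : a ≤ a') {x : ℝ} (hx0 : 0 ≤ x) (hx : x ≤ 1 / 2) :
    ∫ y in 0..x, betaIntegrand a' b' y
      ≤ max 1 ((1 / 2 : ℝ) ^ (b' - b)) * x ^ (a' - a) * ∫ y in 0..x, betaIntegrand a b y := by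
  have hx1 : x ∈ Icc (0 : ℝ) 1 := ⟨hx0, by linarith⟩
  rw [← intervalIntegral.integral_const_mul]
  refine integral_mono_on_of_le_Ioo hx0
    (intervalIntegrable_betaIntegrand ha' hb' ⟨le_rfl, zero_le_one⟩ hx1)
    ((intervalIntegrable_betaIntegrand ha hb ⟨le_rfl, zero_le_one⟩ hx1).const_mul _)
    fun y hy => ?_
  have hy1 : y < 1 := by linarith [hy.2]
  rw [betaIntegrand_eq_mul (a := a') (b := b') a b hy.1 hy1, mul_comm (max _ _)]
  refine mul_le_mul_of_nonneg_right (mul_le_mul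
    (Real.rpow_le_rpow hy.1.le hy.2.le (sub_nonneg.2 haa))
    (one_sub_rpow_le_max _ hy.1.le (by linarith [hy.2])) (Real.rpow_nonneg (by linarith) _)
    (Real.rpow_nonneg hx0 _)) (betaIntegrand_nonneg hy.1.le hy1.le)

lemma exists_betaCDF_le_rpow_mul (ha : 0 < a) (hb : 0 < b) (ha' : 0 < a') (hb' : 0 < b')
    (haa : a ≤ a') : ∃ C, ∀ x ∈ Ioc (0 : ℝ) (1 / 2),
      betaCDF a' b' x ≤ C * x ^ (a' - a) * betaCDF a b x := by
  refine ⟨max 1 ((1 / 2 : ℝ) ^ (b' - b)) * (∫ y in 0..1, betaIntegrand a b y) /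
    ∫ y in 0..1, betaIntegrand a' b' y, fun x hx => ?_⟩
  have hI := integral_betaIntegrand_pos ha hb one_pos le_rfl
  have hI' := integral_betaIntegrand_pos ha' hb' one_pos le_rfl
  rw [betaCDF_eq hx.1.le (by linarith [hx.2]), betaCDF_eq hx.1.le (by linarith [hx.2]),
    div_le_iff₀ hI']
  refine (integral_betaIntegrand_le_rpow_mul ha hb ha' hb' haa hx.1.le hx.2).trans_eq ?_
  field_simp

lemma le_of_forall_betaCDF_le (ha : 0 < a) (hb : 0 < b) (ha' : 0 < a') (hb' : 0 < b')
    (H : ∀ x ∈ Icc (0 : ℝ) 1, betaCDF a b x ≤ betaCDF a' b' x) : a' ≤ a := by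
  by_contra! hlt
  obtain ⟨C, hC⟩ := exists_betaCDF_le_rpow_mul ha hb ha' hb' hlt.le
  have hbound : ∀ x ∈ Ioc (0 : ℝ) (1 / 2), 1 ≤ C * x ^ (a' - a) := fun x hx => by
    have hpos := betaCDF_pos ha hb hx.1 (by linarith [hx.2])
    have := (H x ⟨hx.1.le, by linarith [hx.2]⟩).trans (hC x hx)
    nlinarith
  have hlim : Tendsto (fun x : ℝ => C * x ^ (a' - a)) (𝓝[>] 0) (𝓝 0) := by
    have h := (Real.continuousAt_rpow_const 0 (a' - a) (Or.inr (sub_nonneg.2 hlt.le))).tendsto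
      |>.const_mul C
    rw [Real.zero_rpow (sub_ne_zero.2 hlt.ne'), mul_zero] at h
    exact h.mono_left nhdsWithin_le_nhds
  have := ge_of_tendsto hlim (eventually_of_mem (Ioc_mem_nhdsGT (by norm_num)) hbound)
  linarith

lemma betaCDF_swap_le (ha : 0 < a) (hb : 0 < b) (ha' : 0 < a') (hb' : 0 < b')
    (H : ∀ x ∈ Icc (0 : ℝ) 1, betaCDF a b x ≤ betaCDF a' b' x) :
    ∀ x ∈ Icc (0 : ℝ) 1, betaCDF b' a' x ≤ betaCDF b a x := fun x hx => by
  have := H (1 - x) ⟨sub_nonneg.2 hx.2, sub_le_self 1 hx.1⟩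
  rw [betaCDF_one_sub hb ha hx, betaCDF_one_sub hb' ha' hx] at this
  linarith

end

/-- Theorem 1: `Beta(a',b') ≤_st Beta(a,b)` iff `a ≥ a'` and `b ≤ b'`. -/
theorem beta_stochastic_dominance_iff (a b a' b' : ℝ)
    (ha : 0 < a) (hb : 0 < b) (ha' : 0 < a') (hb' : 0 < b') :
    (∀ x ∈ Set.Icc (0 : ℝ) 1, betaCDF a b x ≤ betaCDF a' b' x) ↔ (a' ≤ a ∧ b ≤ b') := by
  refine ⟨fun H => ⟨le_of_forall_betaCDF_le ha hb ha' hb' H, ?_⟩,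
    fun ⟨haa, hbb⟩ x hx => betaCDF_le_betaCDF ha hb ha' hb' haa hbb hx⟩
  exact le_of_forall_betaCDF_le hb' ha' hb ha (betaCDF_swap_le ha hb ha' hb' H)
end

section
/- If X and Y are random variables with finite means, continuous strictly increasing CDFs on their supporting intervals, and X ≤_c Y in the convex transform order, then P(X ≥ E[X]) ≥ P(Y ≥ E[Y]). -/
/-!
With `F`, `G` the cdfs of `X`, `Y`, the map `φ = G⁻¹ ∘ F` is the quantile coupling: it pushes the
law of `X` forward to the law of `Y`, so `E Y = E φ(X)`. As `φ` is convex and `E X` lies in the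
interior of the support interval, Jensen's inequality (through a supporting line of `φ` at `E X`)
gives `φ(E X) ≤ E Y`, that is `F(E X) = G(φ(E X)) ≤ G(E Y)`. Without atoms,
`P(X ≥ E X) = 1 - F(E X)`, and similarly for `Y`.
-/

open MeasureTheory ProbabilityTheory Set Filter Function

namespace ConvexOn

variable {S : Set ℝ} {g : ℝ → ℝ}

lemma add_rightDeriv_mul_sub_le (hg : ConvexOn ℝ S g) {x y : ℝ} (hx : x ∈ interior S)
    (hy : y ∈ S) : g x + derivWithin g (Ioi x) x * (y - x) ≤ g y := by
  rcases lt_trichotomy y x with hyx | rfl | hxy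
  · have h := (hg.slope_le_leftDeriv_of_mem_interior hy hx hyx).trans
      (hg.leftDeriv_le_rightDeriv_of_mem_interior hx)
    rw [slope_def_field, div_le_iff₀ (sub_pos.2 hyx)] at h
    linarith
  · simp
  · have h := hg.rightDeriv_le_slope_of_mem_interior hx hy hxy
    rw [slope_def_field, le_div_iff₀ (sub_pos.2 hxy)] at h
    linarith

theorem map_integral_le_of_mem_interior {α : Type*} [MeasurableSpace α] {μ : Measure α}
    [IsProbabilityMeasure μ] {f : α → ℝ} (hg : ConvexOn ℝ S g) (hfS : ∀ᵐ a ∂μ, f a ∈ S)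
    (hmean : ∫ a, f a ∂μ ∈ interior S) (hfi : Integrable f μ) (hgi : Integrable (g ∘ f) μ) :
    g (∫ a, f a ∂μ) ≤ ∫ a, g (f a) ∂μ := by
  set m := ∫ a, f a ∂μ
  set d := derivWithin g (Ioi m) m
  have hdev : Integrable (fun a => d * (f a - m)) μ := (hfi.sub (integrable_const m)).const_mul d
  calc g m = ∫ a, (g m + d * (f a - m)) ∂μ := by
        rw [integral_add (integrable_const _) hdev, integral_const_mul,
          integral_sub hfi (integrable_const m)]
        simp [m]
    _ ≤ ∫ a, g (f a) ∂μ :=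
        integral_mono_ae ((integrable_const _).add hdev) hgi
          (hfS.mono fun _ ha => hg.add_rightDeriv_mul_sub_le hmean ha)

end ConvexOn

namespace ProbabilityTheory

section Cdf

variable {μ : Measure ℝ}

lemma exists_cdf_eq (hμ : Continuous (cdf μ)) {c : ℝ} (hc : c ∈ Ioo 0 1) : ∃ x, cdf μ x = c :=
  mem_range_of_exists_le_of_exists_ge hμ
    ((tendsto_cdf_atBot μ).eventually_le_const hc.1).exists
    ((tendsto_cdf_atTop μ).eventually_const_le hc.2).exists

variable [IsProbabilityMeasure μ]

lemma mem_of_cdf_mem_Ioo {K : Set ℝ} (hK : K.OrdConnected) (hμK : μ K = 1) {x : ℝ}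
    (hx : cdf μ x ∈ Ioo 0 1) : x ∈ K := by
  have hKc : μ Kᶜ = 0 := (prob_compl_eq_zero_iff hK.measurableSet).2 hμK
  obtain ⟨y, hyK, hyx⟩ : ∃ y ∈ K, y ≤ x := by
    by_contra! h
    have : μ (Iic x) = 0 := measure_mono_null (fun y hy hyK => (h y hyK).not_ge hy) hKc
    rw [← ofReal_cdf, ENNReal.ofReal_eq_zero] at this
    exact this.not_gt hx.1
  obtain ⟨z, hzK, hxz⟩ : ∃ z ∈ K, x ≤ z := by
    by_contra! h
    have : μ K ≤ μ (Iic x) := measure_mono fun z hz => (h z hz).le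
    rw [hμK, ← ofReal_cdf, ENNReal.one_le_ofReal] at this
    exact this.not_gt hx.2
  exact hK.out hyK hzK ⟨hyx, hxz⟩

lemma cdf_integral_pos (hint : Integrable id μ) : 0 < cdf μ (∫ x, x ∂μ) := by
  rw [← ENNReal.ofReal_pos, ofReal_cdf]
  exact measure_le_integral_pos hint

lemma nullSingletonClass_of_continuous_cdf (hμ : Continuous (cdf μ)) : NullSingletonClass μ where
  measure_singleton a := by
    rw [← measure_cdf μ, StieltjesFunction.measure_singleton,
      hμ.continuousWithinAt.leftLim_eq, sub_self, ENNReal.ofReal_zero]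

lemma measure_Ici_of_continuous_cdf (hμ : Continuous (cdf μ)) (a : ℝ) :
    μ (Ici a) = 1 - ENNReal.ofReal (cdf μ a) := by
  have := nullSingletonClass_of_continuous_cdf hμ
  rw [← compl_Iio, prob_compl_eq_one_sub measurableSet_Iio, measure_congr Iio_ae_eq_Iic,
    ofReal_cdf]

lemma cdf_integral_lt_one (hμ : Continuous (cdf μ)) (hint : Integrable id μ) :
    cdf μ (∫ x, x ∂μ) < 1 := by
  have h := measure_integral_le_pos hint
  change 0 < μ (Ici _) at h
  rwa [measure_Ici_of_continuous_cdf hμ, tsub_pos_iff_lt, ENNReal.ofReal_lt_one] at h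

lemma measure_cdf_le_of_mem_Ioo (hμ : Continuous (cdf μ)) {c : ℝ} (hc : c ∈ Ioo 0 1) :
    μ {x | cdf μ x ≤ c} = ENNReal.ofReal c := by
  set A := {x | cdf μ x ≤ c}
  obtain ⟨x₀, hx₀⟩ := exists_cdf_eq hμ hc
  have hA : A.Nonempty := ⟨x₀, hx₀.le⟩
  have hA_bdd : BddAbove A := by
    obtain ⟨b, hb⟩ := ((tendsto_cdf_atTop μ).eventually_const_lt hc.2).exists
    exact ⟨b, fun x hx => le_of_not_gt fun hbx => (hb.trans_le (monotone_cdf μ hbx.le)).not_ge hx⟩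
  have hb : cdf μ (sSup A) = c :=
    le_antisymm ((isClosed_le hμ continuous_const).csSup_mem hA hA_bdd)
      (hx₀ ▸ monotone_cdf μ (le_csSup hA_bdd hx₀.le))
  have hA_eq : A = Iic (sSup A) :=
    Subset.antisymm (fun x hx => le_csSup hA_bdd hx) fun x hx => (monotone_cdf μ hx).trans hb.le
  rw [hA_eq, ← ofReal_cdf, hb]

lemma ae_cdf_mem_Ioo (hμ : Continuous (cdf μ)) : ∀ᵐ x ∂μ, cdf μ x ∈ Ioo 0 1 := by
  -- `{F ≤ 0} ⊆ {F ≤ c}` has measure at most `c` for every `c ∈ (0, 1)`; dually for `{1 ≤ F}`.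
  have hlow : μ {x | cdf μ x ≤ 0} ≤ ENNReal.ofReal 0 :=
    ge_of_tendsto ((ENNReal.continuous_ofReal.tendsto 0).mono_left nhdsWithin_le_nhds)
      (eventually_of_mem (Ioo_mem_nhdsGT one_pos) fun c hc =>
        (measure_mono fun x (hx : cdf μ x ≤ 0) => hx.trans hc.1.le).trans_eq
          (measure_cdf_le_of_mem_Ioo hμ hc))
  have hhigh : μ {x | 1 ≤ cdf μ x} ≤ 1 - ENNReal.ofReal 1 :=
    ge_of_tendsto (((ENNReal.continuous_sub_left ENNReal.one_ne_top).comp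
        ENNReal.continuous_ofReal).tendsto 1 |>.mono_left nhdsWithin_le_nhds)
      (eventually_of_mem (Ioo_mem_nhdsLT one_pos) fun c hc => by
        rw [Function.comp_apply, ← measure_cdf_le_of_mem_Ioo hμ hc,
          ← prob_compl_eq_one_sub (measurableSet_le hμ.measurable measurable_const)]
        exact measure_mono fun x (hx : 1 ≤ cdf μ x) (hxc : cdf μ x ≤ c) =>
          (hx.trans hxc).not_gt hc.2)
  rw [ENNReal.ofReal_zero, nonpos_iff_eq_zero] at hlow
  rw [ENNReal.ofReal_one, tsub_self, nonpos_iff_eq_zero] at hhigh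
  refine ae_iff.2 (measure_mono_null (fun x (hx : cdf μ x ∉ Ioo 0 1) => ?_)
    (measure_union_null hlow hhigh))
  exact (le_or_gt (cdf μ x) 0).imp_right fun h0 => not_lt.1 fun h1 => hx ⟨h0, h1⟩

lemma measure_cdf_le (hμ : Continuous (cdf μ)) {c : ℝ} (hc : c ∈ Icc 0 1) :
    μ {x | cdf μ x ≤ c} = ENNReal.ofReal c := by
  rcases hc.1.eq_or_lt with rfl | hc0
  · rw [ENNReal.ofReal_zero]
    exact measure_mono_null (fun x (hx : cdf μ x ≤ 0) (h : cdf μ x ∈ Ioo 0 1) => hx.not_gt h.1)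
      (ae_iff.1 (ae_cdf_mem_Ioo hμ))
  rcases hc.2.eq_or_lt with rfl | hc1
  · simp [cdf_le_one]
  exact measure_cdf_le_of_mem_Ioo hμ ⟨hc0, hc1⟩

end Cdf

/-- The map `G⁻¹ ∘ F` of the convex transform order, where `F`, `G` are the cdfs of `μ`, `ν`.
`invFun` returns junk outside the range of `G`, so only points with `F x ∈ Ioo 0 1` matter. -/
noncomputable def cdfTransform (μ ν : Measure ℝ) (x : ℝ) : ℝ := invFun (cdf ν) (cdf μ x)

section Transform

variable {μ ν : Measure ℝ} {J : Set ℝ}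

lemma cdf_invFun_cdf (hν : Continuous (cdf ν)) {c : ℝ} (hc : c ∈ Ioo 0 1) :
    cdf ν (invFun (cdf ν) c) = c :=
  invFun_eq (exists_cdf_eq hν hc)

lemma invFun_cdf_le_iff [IsProbabilityMeasure ν] (hν : Continuous (cdf ν))
    (hJ : J.OrdConnected) (hνJ : ν J = 1) (hG : StrictMonoOn (cdf ν) J)
    {c t : ℝ} (hc : c ∈ Ioo 0 1) :
    invFun (cdf ν) c ≤ t ↔ c ≤ cdf ν t := by
  have hq := cdf_invFun_cdf hν hc
  refine ⟨fun h => hq ▸ monotone_cdf ν h, fun h => le_of_not_gt fun htq => ?_⟩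
  have ht : cdf ν t = c := le_antisymm (hq ▸ monotone_cdf ν htq.le) h
  have hlt := hG (mem_of_cdf_mem_Ioo hJ hνJ (by rwa [ht]))
    (mem_of_cdf_mem_Ioo hJ hνJ (by rwa [hq])) htq
  rw [ht, hq] at hlt
  exact hlt.false

lemma monotoneOn_cdfTransform [IsProbabilityMeasure ν] (hν : Continuous (cdf ν))
    (hJ : J.OrdConnected) (hνJ : ν J = 1) (hG : StrictMonoOn (cdf ν) J) :
    MonotoneOn (cdfTransform μ ν) {x | cdf μ x ∈ Ioo 0 1} :=
  fun _ hx _ hy hxy => (invFun_cdf_le_iff hν hJ hνJ hG hx).2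
    ((monotone_cdf μ hxy).trans_eq (cdf_invFun_cdf hν hy).symm)

lemma aemeasurable_cdfTransform [IsProbabilityMeasure μ] [IsProbabilityMeasure ν]
    (hμ : Continuous (cdf μ)) (hν : Continuous (cdf ν)) (hJ : J.OrdConnected) (hνJ : ν J = 1)
    (hG : StrictMonoOn (cdf ν) J) :
    AEMeasurable (cdfTransform μ ν) μ := by
  have h : AEMeasurable (cdfTransform μ ν) (μ.restrict {x | cdf μ x ∈ Ioo 0 1}) :=
    aemeasurable_restrict_of_monotoneOn (hμ.measurable measurableSet_Ioo)
      (monotoneOn_cdfTransform hν hJ hνJ hG)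
  rwa [Measure.restrict_eq_self_of_ae_mem (s := {x | cdf μ x ∈ Ioo 0 1}) (ae_cdf_mem_Ioo hμ)]
    at h

theorem map_cdfTransform [IsProbabilityMeasure μ] [IsProbabilityMeasure ν]
    (hμ : Continuous (cdf μ)) (hν : Continuous (cdf ν)) (hJ : J.OrdConnected) (hνJ : ν J = 1)
    (hG : StrictMonoOn (cdf ν) J) :
    μ.map (cdfTransform μ ν) = ν := by
  have hφ := aemeasurable_cdfTransform hμ hν hJ hνJ hG
  have := Measure.isProbabilityMeasure_map hφ
  refine Measure.ext_of_Iic _ _ fun t => ?_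
  rw [Measure.map_apply_of_aemeasurable hφ measurableSet_Iic, ← ofReal_cdf ν t,
    ← measure_cdf_le hμ ⟨cdf_nonneg ν t, cdf_le_one ν t⟩]
  exact measure_congr ((ae_cdf_mem_Ioo hμ).mono fun x hx =>
    propext (invFun_cdf_le_iff hν hJ hνJ hG hx))

end Transform

end ProbabilityTheory

theorem exceedance_of_mean_monotone_of_convex_order_general
    (P Q : Measure ℝ) [IsProbabilityMeasure P] [IsProbabilityMeasure Q]
    (hPint : Integrable id P) (hQint : Integrable id Q)
    (I J : Set ℝ) (hI : I.OrdConnected) (hJ : J.OrdConnected)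
    (hPI : P I = 1) (hQJ : Q J = 1)
    (hFc : Continuous (fun x => cdf P x)) (hGc : Continuous (fun x => cdf Q x))
    (hG : StrictMonoOn (fun x => cdf Q x) J)
    -- convex transform order `X ≤_c Y`:
    (hc : ConvexOn ℝ I (fun x => Function.invFun (fun y => cdf Q y) (cdf P x))) :
    Q {x | (∫ y, y ∂Q) ≤ x} ≤ P {x | (∫ y, y ∂P) ≤ x} := by
  set φ := cdfTransform P Q
  have hφ : AEMeasurable φ P := aemeasurable_cdfTransform hFc hGc hJ hQJ hG
  have hmap : P.map φ = Q := map_cdfTransform hFc hGc hJ hQJ hG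
  have hmean : cdf P (∫ x, x ∂P) ∈ Ioo 0 1 :=
    ⟨cdf_integral_pos hPint, cdf_integral_lt_one hFc hPint⟩
  have hmean_mem : ∫ x, x ∂P ∈ interior I :=
    interior_mono (fun x hx => mem_of_cdf_mem_Ioo hI hPI hx)
      (mem_interior_iff_mem_nhds.2 ((isOpen_Ioo.preimage hFc).mem_nhds hmean))
  have hjensen : φ (∫ x, x ∂P) ≤ ∫ y, y ∂Q := by
    rw [← hmap, integral_map hφ (hmap ▸ hQint.aestronglyMeasurable)]
    refine ConvexOn.map_integral_le_of_mem_interior hc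
      ((mem_ae_iff_prob_eq_one hI.measurableSet).2 hPI) hmean_mem hPint ?_
    exact (integrable_map_measure (hmap ▸ hQint.aestronglyMeasurable) hφ).1 (hmap ▸ hQint)
  have hcdf : cdf P (∫ x, x ∂P) ≤ cdf Q (∫ y, y ∂Q) :=
    cdf_invFun_cdf hGc hmean ▸ monotone_cdf Q hjensen
  change Q (Ici _) ≤ P (Ici _)
  rw [measure_Ici_of_continuous_cdf hGc, measure_Ici_of_continuous_cdf hFc]
  gcongr

/-- Corollary 7: if `X ≤_c Y` then `P(X ≥ E X) ≥ P(Y ≥ E Y)`. -/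
theorem exceedance_of_mean_monotone_of_convex_order
    (P Q : Measure ℝ) [IsProbabilityMeasure P] [IsProbabilityMeasure Q]
    (hPint : Integrable id P) (hQint : Integrable id Q)
    (I J : Set ℝ) (hI : I.OrdConnected) (hJ : J.OrdConnected)
    (hPI : P I = 1) (hQJ : Q J = 1)
    (hFc : Continuous (fun x => cdf P x)) (hGc : Continuous (fun x => cdf Q x))
    (hF : StrictMonoOn (fun x => cdf P x) I)
    (hG : StrictMonoOn (fun x => cdf Q x) J)
    -- convex transform order `X ≤_c Y`:
    (hc : ConvexOn ℝ I (fun x => Function.invFun (fun y => cdf Q y) (cdf P x))) :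
    Q {x | (∫ y, y ∂Q) ≤ x} ≤ P {x | (∫ y, y ∂P) ≤ x} :=
  exceedance_of_mean_monotone_of_convex_order_general P Q hPint hQint I J hI hJ hPI hQJ hFc hGc hG
    hc
end

section
/- If 1 ≤ a ≤ b, then Beta(a,b) satisfies the mode-median-mean inequality: its mode (a-1)/(a+b-2) (interpreted suitably when a = b = 1) is at most some median, which is at most its mean a/(a+b). -/
open MeasureTheory Set

/-!
Let `f y = y^(a-1) (1-y)^(b-1)` and `F x = ∫_0^x f`, so that `m` is a median iff `2 F m = F 1`.
For `q ≤ 1/2` put `η t = log f (q+t) - log f (q-t)` on `[0, q)`. Then `η 0 = 0` and `η'` has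
the sign of a polynomial in `t²` which is nondecreasing because `a ≤ b`; hence `η` changes sign
at most once, from negative to positive. Comparing `f` on the two sides of `q`:
* at `q = 1/2`, `η ≤ 0`, so `2 F (1/2) ≥ F 1` and there is a median `m ∈ (0, 1/2]`;
* at the mode `q = M` the constant term of that polynomial vanishes, so `η ≥ 0` and
  `2 F M ≤ F 1 = 2 F m`, i.e. `M ≤ m`;
* at `q = m`, either `η ≤ 0` on `(0, t)` or `η ≥ 0` on `(t, m)`; in both cases
  `F (m+t) + F (m-t) ≤ F 1` for `0 ≤ t ≤ m`. Integrating in `t` gives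
  `∫_0^1 F ≤ (1 - m) F 1`, while integration by parts and
  `(y^a (1-y)^b)' = (a - (a+b) y) f y` give `∫_0^1 F = F 1 - ∫_0^1 y f y = b/(a+b) F 1`.
  Hence `m ≤ a/(a+b)`.
-/

namespace BetaMedian

open Real

-- `log f (q+t) - log f (q-t)` for the density `f y = y^c (1-y)^d`
noncomputable def logDensityRatio (c d q t : ℝ) : ℝ :=
  c * (log (q + t) - log (q - t)) - d * (log (1 - q + t) - log (1 - q - t))

def logDensityRatioDerivNum (c d q t : ℝ) : ℝ :=
  (d * (1 - q) - c * q) * t ^ 2 + q * (1 - q) * (c * (1 - q) - d * q)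

lemma integral_comp_add_add_comp_sub {g : ℝ → ℝ} (hg : Continuous g) (q r : ℝ) :
    ∫ t in 0..r, (g (q + t) + g (q - t)) = ∫ x in q - r..q + r, g x := by
  have hadd : IntervalIntegrable (fun t => g (q + t)) volume 0 r :=
    (hg.comp (continuous_const_add q)).intervalIntegrable _ _
  have hsub : IntervalIntegrable (fun t => g (q - t)) volume 0 r :=
    (hg.comp (continuous_sub_left q)).intervalIntegrable _ _
  rw [intervalIntegral.integral_add hadd hsub,
    intervalIntegral.integral_comp_add_left, intervalIntegral.integral_comp_sub_left, add_comm]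
  simp only [add_zero, sub_zero]
  exact intervalIntegral.integral_add_adjacent_intervals (hg.intervalIntegrable _ _)
    (hg.intervalIntegrable _ _)

section LogDensityRatio

variable {c d q s t : ℝ}

lemma logDensityRatio_zero : logDensityRatio c d q 0 = 0 := by
  simp [logDensityRatio]

lemma hasDerivAt_logDensityRatio (ht : 0 ≤ t) (htq : t < q) (hq : q ≤ 1 / 2) :
    HasDerivAt (logDensityRatio c d q)
      (2 * logDensityRatioDerivNum c d q t / ((q ^ 2 - t ^ 2) * ((1 - q) ^ 2 - t ^ 2))) t := by
  have h₁ : q + t ≠ 0 := by linarith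
  have h₂ : q - t ≠ 0 := by linarith
  have h₃ : 1 - q + t ≠ 0 := by linarith
  have h₄ : 1 - q - t ≠ 0 := by linarith
  have := ((((hasDerivAt_id t).const_add q).log h₁).sub (((hasDerivAt_id t).const_sub q).log h₂)
    |>.const_mul c).sub
    ((((hasDerivAt_id t).const_add (1 - q)).log h₃).sub
      (((hasDerivAt_id t).const_sub (1 - q)).log h₄) |>.const_mul d)
  refine this.congr_deriv ?_
  have h₅ : q ^ 2 - t ^ 2 ≠ 0 := by nlinarith
  have h₆ : (1 - q) ^ 2 - t ^ 2 ≠ 0 := by nlinarith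
  simp only [id, logDensityRatioDerivNum]
  field_simp
  ring

lemma logDensityRatioDerivNum_le (hd : 0 ≤ d) (hcd : c ≤ d) (hq : 0 ≤ q) (hq2 : q ≤ 1 / 2)
    (hs : 0 ≤ s) (hst : s ≤ t) :
    logDensityRatioDerivNum c d q s ≤ logDensityRatioDerivNum c d q t := by
  have hlead : 0 ≤ d * (1 - q) - c * q := by nlinarith
  unfold logDensityRatioDerivNum
  nlinarith [mul_le_mul_of_nonneg_left (pow_le_pow_left₀ hs hst 2) hlead]

lemma logDensityRatio_monotoneOn (hd : 0 ≤ d) (hcd : c ≤ d) (hq : q ≤ 1 / 2) (hs : 0 ≤ s)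
    (htq : t < q) (hN : 0 ≤ logDensityRatioDerivNum c d q s) :
    MonotoneOn (logDensityRatio c d q) (Icc s t) := by
  have hderiv : ∀ x ∈ Icc s t, HasDerivAt (logDensityRatio c d q) _ x := fun x hx =>
    hasDerivAt_logDensityRatio (hs.trans hx.1) (hx.2.trans_lt htq) hq
  refine monotoneOn_of_hasDerivWithinAt_nonneg (convex_Icc s t)
    (fun x hx => (hderiv x hx).continuousAt.continuousWithinAt)
    (fun x hx => (hderiv x (interior_subset hx)).hasDerivWithinAt) fun x hx => ?_
  rw [interior_Icc] at hx
  have hx0 : 0 ≤ x := hs.trans hx.1.le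
  have hxq : x < q := hx.2.trans htq
  have hden : 0 < (q ^ 2 - x ^ 2) * ((1 - q) ^ 2 - x ^ 2) := mul_pos (by nlinarith) (by nlinarith)
  have hNx := logDensityRatioDerivNum_le hd hcd (hx0.trans hxq.le) hq hs hx.1.le
  exact div_nonneg (by linarith) hden.le

lemma logDensityRatio_strictAntiOn (hd : 0 ≤ d) (hcd : c ≤ d) (hq : q ≤ 1 / 2) (htq : t < q)
    (hN : logDensityRatioDerivNum c d q t < 0) :
    StrictAntiOn (logDensityRatio c d q) (Icc 0 t) := by
  have hderiv : ∀ x ∈ Icc 0 t, HasDerivAt (logDensityRatio c d q) _ x := fun x hx =>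
    hasDerivAt_logDensityRatio hx.1 (hx.2.trans_lt htq) hq
  refine strictAntiOn_of_hasDerivWithinAt_neg (convex_Icc 0 t)
    (fun x hx => (hderiv x hx).continuousAt.continuousWithinAt)
    (fun x hx => (hderiv x (interior_subset hx)).hasDerivWithinAt) fun x hx => ?_
  rw [interior_Icc] at hx
  have hx0 : 0 < x := hx.1
  have hxq : x < q := hx.2.trans htq
  have hden : 0 < (q ^ 2 - x ^ 2) * ((1 - q) ^ 2 - x ^ 2) := mul_pos (by nlinarith) (by nlinarith)
  have hNx := logDensityRatioDerivNum_le hd hcd (hx.1.le.trans hxq.le) hq hx.1.le hx.2.le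
  exact div_neg_of_neg_of_pos (by linarith) hden

lemma logDensityRatio_nonneg_of_le (hd : 0 ≤ d) (hcd : c ≤ d) (hq : q ≤ 1 / 2) (hs : 0 < s)
    (hst : s ≤ t) (htq : t < q) (hηs : 0 ≤ logDensityRatio c d q s) :
    0 ≤ logDensityRatio c d q t := by
  have hN : 0 ≤ logDensityRatioDerivNum c d q s := by
    by_contra! hN
    have := logDensityRatio_strictAntiOn hd hcd hq (hst.trans_lt htq) hN
      (left_mem_Icc.2 hs.le) (right_mem_Icc.2 hs.le) hs
    rw [logDensityRatio_zero] at this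
    linarith
  exact hηs.trans <| logDensityRatio_monotoneOn hd hcd hq hs.le htq hN
    (left_mem_Icc.2 hst) (right_mem_Icc.2 hst) hst

lemma logDensityRatio_nonneg_of_mode (hd : 0 ≤ d) (hcd : c ≤ d) (hq : q ≤ 1 / 2)
    (hmode : c * (1 - q) = d * q) (ht : 0 ≤ t) (htq : t < q) :
    0 ≤ logDensityRatio c d q t := by
  have hN : logDensityRatioDerivNum c d q 0 = 0 := by
    simp [logDensityRatioDerivNum, hmode]
  have := logDensityRatio_monotoneOn hd hcd hq le_rfl htq hN.ge
    (left_mem_Icc.2 ht) (right_mem_Icc.2 ht) ht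
  rwa [logDensityRatio_zero] at this

lemma logDensityRatio_half_nonpos (hcd : c ≤ d) (ht : 0 ≤ t) (ht2 : t < 1 / 2) :
    logDensityRatio c d (1 / 2) t ≤ 0 := by
  have hlog : log (1 / 2 - t) ≤ log (1 / 2 + t) := log_le_log (by linarith) (by linarith)
  have : logDensityRatio c d (1 / 2) t = (c - d) * (log (1 / 2 + t) - log (1 / 2 - t)) := by
    rw [logDensityRatio]; norm_num; ring
  rw [this]
  exact mul_nonpos_of_nonpos_of_nonneg (by linarith) (by linarith)

end LogDensityRatio

noncomputable def betaDensity (a b y : ℝ) : ℝ := y ^ (a - 1) * (1 - y) ^ (b - 1)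

noncomputable def betaPrimitive (a b x : ℝ) : ℝ := ∫ y in 0..x, betaDensity a b y

section BetaDensity

variable {a b q t x y : ℝ}

lemma continuous_betaDensity (ha : 1 ≤ a) (hb : 1 ≤ b) : Continuous (betaDensity a b) :=
  (continuous_rpow_const (by linarith)).mul
    ((continuous_rpow_const (by linarith)).comp (continuous_const.sub continuous_id))

lemma betaDensity_pos (hy : y ∈ Ioo 0 1) : 0 < betaDensity a b y :=
  mul_pos (rpow_pos_of_pos hy.1 _) (rpow_pos_of_pos (sub_pos.2 hy.2) _)

lemma log_betaDensity_add_sub_log_betaDensity_sub (ht : 0 ≤ t) (htq : t < q) (hq : q + t < 1) :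
    log (betaDensity a b (q + t)) - log (betaDensity a b (q - t)) =
      logDensityRatio (a - 1) (b - 1) q t := by
  have hlog : ∀ y ∈ Ioo (0 : ℝ) 1,
      log (betaDensity a b y) = (a - 1) * log y + (b - 1) * log (1 - y) := fun y hy => by
    rw [betaDensity, log_mul (rpow_pos_of_pos hy.1 _).ne' (rpow_pos_of_pos (sub_pos.2 hy.2) _).ne',
      log_rpow hy.1, log_rpow (sub_pos.2 hy.2)]
  rw [hlog _ ⟨by linarith, hq⟩, hlog _ ⟨by linarith, by linarith⟩, logDensityRatio]
  ring_nf

lemma betaDensity_add_le_sub_iff (ht : 0 ≤ t) (htq : t < q) (hq : q + t < 1) :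
    betaDensity a b (q + t) ≤ betaDensity a b (q - t) ↔
      logDensityRatio (a - 1) (b - 1) q t ≤ 0 := by
  rw [← log_betaDensity_add_sub_log_betaDensity_sub ht htq hq, sub_nonpos,
    log_le_log_iff (betaDensity_pos ⟨by linarith, hq⟩)
      (betaDensity_pos ⟨by linarith, by linarith⟩)]

lemma betaDensity_sub_le_add_iff (ht : 0 ≤ t) (htq : t < q) (hq : q + t < 1) :
    betaDensity a b (q - t) ≤ betaDensity a b (q + t) ↔
      0 ≤ logDensityRatio (a - 1) (b - 1) q t := by
  rw [← log_betaDensity_add_sub_log_betaDensity_sub ht htq hq, sub_nonneg,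
    log_le_log_iff (betaDensity_pos ⟨by linarith, by linarith⟩)
      (betaDensity_pos ⟨by linarith, hq⟩)]

lemma hasDerivAt_betaPrimitive (ha : 1 ≤ a) (hb : 1 ≤ b) (x : ℝ) :
    HasDerivAt (betaPrimitive a b) (betaDensity a b x) x :=
  ((continuous_betaDensity ha hb).integral_hasStrictDerivAt 0 x).hasDerivAt

lemma continuous_betaPrimitive (ha : 1 ≤ a) (hb : 1 ≤ b) : Continuous (betaPrimitive a b) :=
  continuous_iff_continuousAt.2 fun x => (hasDerivAt_betaPrimitive ha hb x).continuousAt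

@[simp]
lemma betaPrimitive_zero : betaPrimitive a b 0 = 0 := intervalIntegral.integral_same

lemma integral_betaDensity (ha : 1 ≤ a) (hb : 1 ≤ b) (u v : ℝ) :
    ∫ y in u..v, betaDensity a b y = betaPrimitive a b v - betaPrimitive a b u :=
  (intervalIntegral.integral_interval_sub_left
    ((continuous_betaDensity ha hb).intervalIntegrable _ _)
    ((continuous_betaDensity ha hb).intervalIntegrable _ _)).symm

lemma betaPrimitive_strictMonoOn (ha : 1 ≤ a) (hb : 1 ≤ b) :
    StrictMonoOn (betaPrimitive a b) (Icc 0 1) :=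
  strictMonoOn_of_hasDerivWithinAt_pos (convex_Icc 0 1)
    (continuous_betaPrimitive ha hb).continuousOn
    (fun x _ => (hasDerivAt_betaPrimitive ha hb x).hasDerivWithinAt)
    (fun x hx => betaDensity_pos (by rwa [interior_Icc] at hx))

lemma betaPrimitive_le_betaPrimitive_one (ha : 1 ≤ a) (hb : 1 ≤ b) (hx : x ∈ Icc 0 1) :
    betaPrimitive a b x ≤ betaPrimitive a b 1 :=
  (betaPrimitive_strictMonoOn ha hb).monotoneOn hx (right_mem_Icc.2 zero_le_one) hx.2

lemma betaPrimitive_one_pos (ha : 1 ≤ a) (hb : 1 ≤ b) : 0 < betaPrimitive a b 1 := by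
  simpa using betaPrimitive_strictMonoOn ha hb (left_mem_Icc.2 zero_le_one)
    (right_mem_Icc.2 zero_le_one) zero_lt_one

lemma betaCDF_eq (hx : x ∈ Icc 0 1) :
    betaCDF a b x = betaPrimitive a b x / betaPrimitive a b 1 := by
  have hInt : ∀ x ∈ Icc (0 : ℝ) 1, betaInt a b x = betaPrimitive a b x := fun x hx => by
    rw [betaInt, min_eq_left hx.2, betaPrimitive, intervalIntegral.integral_of_le hx.1,
      integral_Ioc_eq_integral_Ioo]
    rfl
  rw [betaCDF, hInt x hx, hInt 1 (right_mem_Icc.2 zero_le_one)]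

lemma integral_betaDensity_comp_add (ha : 1 ≤ a) (hb : 1 ≤ b) (q u v : ℝ) :
    ∫ s in u..v, betaDensity a b (q + s) =
      betaPrimitive a b (q + v) - betaPrimitive a b (q + u) := by
  rw [intervalIntegral.integral_comp_add_left, integral_betaDensity ha hb]

lemma integral_betaDensity_comp_sub (ha : 1 ≤ a) (hb : 1 ≤ b) (q u v : ℝ) :
    ∫ s in u..v, betaDensity a b (q - s) =
      betaPrimitive a b (q - u) - betaPrimitive a b (q - v) := by
  rw [intervalIntegral.integral_comp_sub_left, integral_betaDensity ha hb]

lemma betaPrimitive_add_add_sub_le_two_mul (ha : 1 ≤ a) (hb : 1 ≤ b) (ht : 0 ≤ t)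
    (h : ∀ s ∈ Ioo 0 t, betaDensity a b (q + s) ≤ betaDensity a b (q - s)) :
    betaPrimitive a b (q + t) + betaPrimitive a b (q - t) ≤ 2 * betaPrimitive a b q := by
  have hf := continuous_betaDensity ha hb
  have : ∫ s in 0..t, betaDensity a b (q + s) ≤ ∫ s in 0..t, betaDensity a b (q - s) :=
    intervalIntegral.integral_mono_on_of_le_Ioo ht
    ((hf.comp (continuous_const_add q)).intervalIntegrable _ _)
    ((hf.comp (continuous_sub_left q)).intervalIntegrable _ _) h
  rw [integral_betaDensity_comp_add ha hb, integral_betaDensity_comp_sub ha hb] at this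
  simp only [add_zero, sub_zero] at this
  linarith

lemma betaPrimitive_add_add_sub_le_betaPrimitive_one (ha : 1 ≤ a) (hb : 1 ≤ b) (ht : 0 ≤ t)
    (htq : t ≤ q) (hq : q ≤ 1 / 2)
    (h : ∀ s ∈ Ioo t q, betaDensity a b (q - s) ≤ betaDensity a b (q + s)) :
    betaPrimitive a b (q + t) + betaPrimitive a b (q - t) ≤ betaPrimitive a b 1 := by
  have hf := continuous_betaDensity ha hb
  have : ∫ s in t..q, betaDensity a b (q - s) ≤ ∫ s in t..q, betaDensity a b (q + s) :=
    intervalIntegral.integral_mono_on_of_le_Ioo htq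
    ((hf.comp (continuous_sub_left q)).intervalIntegrable _ _)
    ((hf.comp (continuous_const_add q)).intervalIntegrable _ _) h
  rw [integral_betaDensity_comp_add ha hb, integral_betaDensity_comp_sub ha hb] at this
  have h2q := betaPrimitive_le_betaPrimitive_one ha hb (x := q + q) ⟨by linarith, by linarith⟩
  simp only [sub_self, betaPrimitive_zero] at this
  linarith

lemma hasDerivAt_rpow_mul_one_sub_rpow (hy : y ∈ Ioo 0 1) :
    HasDerivAt (fun y => y ^ a * (1 - y) ^ b) ((a - (a + b) * y) * betaDensity a b y) y := by
  have hy1 : 0 < 1 - y := sub_pos.2 hy.2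
  have := (hasDerivAt_rpow_const (p := a) (Or.inl hy.1.ne')).mul
    ((hasDerivAt_rpow_const (p := b) (Or.inl hy1.ne')).comp y ((hasDerivAt_id y).const_sub 1))
  refine this.congr_deriv ?_
  have hya : y ^ a = y ^ (a - 1) * y := by
    rw [← rpow_add_one hy.1.ne']; ring_nf
  have hyb : (1 - y) ^ b = (1 - y) ^ (b - 1) * (1 - y) := by
    rw [← rpow_add_one hy1.ne']; ring_nf
  simp only [Function.comp_def, hya, hyb, betaDensity]
  ring

lemma integral_id_mul_betaDensity (ha : 1 ≤ a) (hb : 1 ≤ b) :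
    (a + b) * ∫ y in 0..1, y * betaDensity a b y = a * betaPrimitive a b 1 := by
  have hf := continuous_betaDensity ha hb
  have hφ : Continuous fun y : ℝ => y ^ a * (1 - y) ^ b :=
    (continuous_rpow_const (by linarith)).mul
      ((continuous_rpow_const (by linarith)).comp (continuous_const.sub continuous_id))
  have hFTC := intervalIntegral.integral_eq_sub_of_hasDerivAt_of_le zero_le_one hφ.continuousOn
    (fun y hy => hasDerivAt_rpow_mul_one_sub_rpow hy)
    (((continuous_const.sub (continuous_const.mul continuous_id)).mul hf).intervalIntegrable 0 1)
  simp only [zero_rpow (by linarith : a ≠ 0), zero_rpow (by linarith : b ≠ 0), sub_self,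
    zero_mul, mul_zero, sub_zero] at hFTC
  simp only [sub_mul, mul_assoc] at hFTC
  have hint₁ : IntervalIntegrable (fun y => a * betaDensity a b y) volume 0 1 :=
    (continuous_const.mul hf).intervalIntegrable 0 1
  have hint₂ : IntervalIntegrable (fun y => (a + b) * (y * betaDensity a b y)) volume 0 1 :=
    (continuous_const.mul (continuous_id.mul hf)).intervalIntegrable 0 1
  rw [intervalIntegral.integral_sub hint₁ hint₂, intervalIntegral.integral_const_mul,
    intervalIntegral.integral_const_mul] at hFTC
  rw [betaPrimitive]
  linarith

lemma integral_id_mul_betaDensity_eq_sub (ha : 1 ≤ a) (hb : 1 ≤ b) :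
    ∫ y in 0..1, y * betaDensity a b y =
      betaPrimitive a b 1 - ∫ y in 0..1, betaPrimitive a b y := by
  have := intervalIntegral.integral_mul_deriv_eq_deriv_mul (a := 0) (b := 1)
    (fun y _ => hasDerivAt_id y) (fun y _ => hasDerivAt_betaPrimitive ha hb y)
    intervalIntegrable_const ((continuous_betaDensity ha hb).intervalIntegrable 0 1)
  simpa using this

end BetaDensity

section Median

variable {a b m t : ℝ}

lemma exists_two_mul_betaPrimitive_eq (ha : 1 ≤ a) (hab : a ≤ b) :
    ∃ m ∈ Ioc (0 : ℝ) (1 / 2), 2 * betaPrimitive a b m = betaPrimitive a b 1 := by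
  have hb : 1 ≤ b := ha.trans hab
  have hhalf : betaPrimitive a b 1 ≤ 2 * betaPrimitive a b (1 / 2) := by
    have := betaPrimitive_add_add_sub_le_two_mul ha hb (q := 1 / 2) (t := 1 / 2) (by norm_num)
      fun s hs => (betaDensity_add_le_sub_iff hs.1.le hs.2 (by linarith [hs.2])).2
        (logDensityRatio_half_nonpos (by linarith) hs.1.le hs.2)
    norm_num at this
    linarith
  have hB := betaPrimitive_one_pos ha hb
  obtain ⟨m, hm, hFm⟩ := intermediate_value_Icc (by norm_num : (0 : ℝ) ≤ 1 / 2)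
    (continuous_betaPrimitive ha hb).continuousOn
    (show betaPrimitive a b 1 / 2 ∈ Icc (betaPrimitive a b 0) (betaPrimitive a b (1 / 2)) from
      ⟨by rw [betaPrimitive_zero]; positivity, by linarith⟩)
  refine ⟨m, ⟨hm.1.lt_of_ne ?_, hm.2⟩, by rw [hFm]; ring⟩
  rintro rfl
  simp only [betaPrimitive_zero] at hFm
  linarith

lemma mode_le_of_two_mul_betaPrimitive_eq (ha : 1 ≤ a) (hab : a ≤ b) (hm : m ∈ Icc 0 1)
    (hmed : 2 * betaPrimitive a b m = betaPrimitive a b 1) : (a - 1) / (a + b - 2) ≤ m := by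
  have hb : 1 ≤ b := ha.trans hab
  obtain rfl | ha' := ha.eq_or_lt
  · simpa using hm.1
  set M := (a - 1) / (a + b - 2) with hM
  have hden : 0 < a + b - 2 := by linarith
  have hM0 : 0 < M := div_pos (by linarith) hden
  have hM2 : M ≤ 1 / 2 := by rw [hM, div_le_iff₀ hden]; linarith
  have hmode : (a - 1) * (1 - M) = (b - 1) * M := by rw [hM]; field_simp; ring
  have hFM : 2 * betaPrimitive a b M ≤ 2 * betaPrimitive a b m := by
    have := betaPrimitive_add_add_sub_le_betaPrimitive_one ha hb le_rfl hM0.le hM2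
      fun s hs => (betaDensity_sub_le_add_iff hs.1.le hs.2 (by linarith [hs.2])).2
        (logDensityRatio_nonneg_of_mode (by linarith) (by linarith) hM2 hmode hs.1.le hs.2)
    simp only [add_zero, sub_zero] at this
    linarith
  exact ((betaPrimitive_strictMonoOn ha hb).le_iff_le ⟨hM0.le, by linarith⟩ hm).1 (by linarith)

lemma betaPrimitive_add_add_sub_le_of_median (ha : 1 ≤ a) (hab : a ≤ b) (hm : m ≤ 1 / 2)
    (hmed : 2 * betaPrimitive a b m = betaPrimitive a b 1) (ht : t ∈ Icc 0 m) :
    betaPrimitive a b (m + t) + betaPrimitive a b (m - t) ≤ betaPrimitive a b 1 := by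
  have hb : 1 ≤ b := ha.trans hab
  by_cases hneg : ∀ s ∈ Ioo 0 t, logDensityRatio (a - 1) (b - 1) m s ≤ 0
  · rw [← hmed]
    exact betaPrimitive_add_add_sub_le_two_mul ha hb ht.1 fun s hs =>
      (betaDensity_add_le_sub_iff hs.1.le (hs.2.trans_le ht.2) (by linarith [hs.2, ht.2])).2
        (hneg s hs)
  · push Not at hneg
    obtain ⟨s, hs, hpos⟩ := hneg
    exact betaPrimitive_add_add_sub_le_betaPrimitive_one ha hb ht.1 ht.2 hm fun u hu =>
      (betaDensity_sub_le_add_iff (ht.1.trans hu.1.le) hu.2 (by linarith [hu.2])).2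
        (logDensityRatio_nonneg_of_le (by linarith) (by linarith) hm hs.1
          (hs.2.le.trans hu.1.le) hu.2 hpos.le)

lemma le_mean_of_two_mul_betaPrimitive_eq (ha : 1 ≤ a) (hab : a ≤ b) (hm0 : 0 ≤ m)
    (hm : m ≤ 1 / 2) (hmed : 2 * betaPrimitive a b m = betaPrimitive a b 1) :
    m ≤ a / (a + b) := by
  have hb : 1 ≤ b := ha.trans hab
  have hF := continuous_betaPrimitive ha hb
  set B := betaPrimitive a b 1
  have hleft : ∫ y in 0..2 * m, betaPrimitive a b y ≤ m * B := by
    have : ∫ t in 0..m, (betaPrimitive a b (m + t) + betaPrimitive a b (m - t)) ≤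
        ∫ _ in 0..m, B :=
      intervalIntegral.integral_mono_on hm0
        (((hF.comp (continuous_const_add m)).add
          (hF.comp (continuous_sub_left m))).intervalIntegrable _ _) intervalIntegrable_const
      fun t ht => betaPrimitive_add_add_sub_le_of_median ha hab hm hmed ht
    rw [integral_comp_add_add_comp_sub hF] at this
    simpa [two_mul] using this
  have hright : ∫ y in 2 * m..1, betaPrimitive a b y ≤ (1 - 2 * m) * B := by
    have : ∫ y in 2 * m..1, betaPrimitive a b y ≤ ∫ _ in 2 * m..1, B :=
      intervalIntegral.integral_mono_on (by linarith) (hF.intervalIntegrable _ _)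
      intervalIntegrable_const
      fun y hy => betaPrimitive_le_betaPrimitive_one ha hb ⟨by linarith [hy.1], hy.2⟩
    simpa using this
  have hsplit := intervalIntegral.integral_add_adjacent_intervals
    (hF.intervalIntegrable (μ := volume) 0 (2 * m)) (hF.intervalIntegrable (2 * m) 1)
  have hmean := integral_id_mul_betaDensity ha hb
  rw [integral_id_mul_betaDensity_eq_sub ha hb, ← hsplit] at hmean
  have hB := betaPrimitive_one_pos ha hb
  rw [le_div_iff₀ (by linarith)]
  nlinarith

end Median

end BetaMedian

open BetaMedian

/-- Mode–median–mean inequality for `Beta(a,b)` with `1 ≤ a ≤ b`: there is a median `m`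
(`P(X ≤ m) ≥ 1/2` and `P(X ≥ m) ≥ 1/2`, the latter being `1 - F(m)` by continuity)
with `(a-1)/(a+b-2) ≤ m ≤ a/(a+b)`. -/
theorem beta_mode_median_mean (a b : ℝ) (ha : 1 ≤ a) (hab : a ≤ b) :
    ∃ m : ℝ, (a - 1) / (a + b - 2) ≤ m ∧ m ≤ a / (a + b) ∧
      1 / 2 ≤ betaCDF a b m ∧ 1 / 2 ≤ 1 - betaCDF a b m := by
  obtain ⟨m, ⟨hm0, hm⟩, hmed⟩ := exists_two_mul_betaPrimitive_eq ha hab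
  have hm1 : m ∈ Icc 0 1 := ⟨hm0.le, by linarith⟩
  have hcdf : betaCDF a b m = 1 / 2 := by
    have hB := betaPrimitive_one_pos ha (ha.trans hab)
    rw [betaCDF_eq hm1, div_eq_iff hB.ne']
    linarith
  refine ⟨m, mode_le_of_two_mul_betaPrimitive_eq ha hab hm1 hmed,
    le_mean_of_two_mul_betaPrimitive_eq ha hab hm0.le hm hmed, ?_, ?_⟩ <;> norm_num [hcdf]
end

section
/- Let X ~ P and Y ~ Q be random variables with distributions supported on [0,1] having strictly increasing continuous CDFs F and G. If X ≤_* Y in the star-shaped transform order (i.e., x ↦ G^{-1}(F(x)) is star-shaped), then Y ≤_st X (i.e., G(x) ≥ F(x) for all x). -/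
/-!
Write `φ = G⁻¹ ∘ F`, so that `F = G ∘ φ` on `[0,1]`; since `G` is increasing it suffices to show
`φ t ≤ t`. For `t < x < 1` star-shapedness gives `φ t ≤ (t / x) φ x`, and `φ x < 1` because
`G (φ x) = F x < F 1 ≤ 1 = G 1`. Letting `x → 1` yields `φ t ≤ t`.
-/

open MeasureTheory ProbabilityTheory Set Filter Topology

theorem le_self_of_starShaped_of_le_one {φ : ℝ → ℝ}
    (hstar : ∀ α ∈ Icc (0 : ℝ) 1, ∀ x ∈ Icc (0 : ℝ) 1, φ (α * x) ≤ α * φ x)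
    (hle : ∀ x ∈ Ico (0 : ℝ) 1, φ x ≤ 1) {t : ℝ} (ht : t ∈ Ico (0 : ℝ) 1) : φ t ≤ t := by
  have hbound : ∀ x ∈ Ioo t 1, φ t ≤ t / x := by
    rintro x ⟨htx, hx1⟩
    have hx0 : 0 < x := ht.1.trans_lt htx
    have hα : t / x ∈ Icc (0 : ℝ) 1 := ⟨div_nonneg ht.1 hx0.le, div_le_one_of_le₀ htx.le hx0.le⟩
    calc φ t = φ (t / x * x) := by rw [div_mul_cancel₀ t hx0.ne']
      _ ≤ t / x * φ x := hstar _ hα x ⟨hx0.le, hx1.le⟩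
      _ ≤ t / x := mul_le_of_le_one_right hα.1 (hle x ⟨hx0.le, hx1⟩)
  have hlim : Tendsto (fun x => t / x) (𝓝[<] 1) (𝓝 t) := by
    have : Tendsto (fun x => t / x) (𝓝 1) (𝓝 (t / 1)) :=
      tendsto_const_nhds.div tendsto_id one_ne_zero
    simpa using this.mono_left nhdsWithin_le_nhds
  exact ge_of_tendsto hlim (eventually_of_mem (Ioo_mem_nhdsLT ht.2) hbound)

section cdf

variable {μ : Measure ℝ} [IsProbabilityMeasure μ] {a b x : ℝ}

theorem cdf_eq_zero_of_lt_of_measure_Icc_eq_one (hμ : μ (Icc a b) = 1) (hx : x < a) :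
    cdf μ x = 0 := by
  have hnull : μ (Icc a b)ᶜ = 0 := (prob_compl_eq_zero_iff measurableSet_Icc).2 hμ
  have : μ (Iic x) = 0 :=
    measure_mono_null (fun y (hy : y ≤ x) (h : y ∈ Icc a b) => (hy.trans_lt hx).not_ge h.1) hnull
  simp [cdf_eq_real, measureReal_def, this]

theorem cdf_eq_one_of_le_of_measure_Icc_eq_one (hμ : μ (Icc a b) = 1) (hx : b ≤ x) :
    cdf μ x = 1 := by
  have : μ (Iic x) = 1 :=
    le_antisymm prob_le_one (hμ ▸ measure_mono fun y hy => hy.2.trans hx)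
  simp [cdf_eq_real, measureReal_def, this]

end cdf

theorem star_order_implies_stochastic_dominance_general
    (P Q : Measure ℝ) [IsProbabilityMeasure P] [IsProbabilityMeasure Q]
    (hPI : P (Set.Icc (0 : ℝ) 1) = 1) (hQI : Q (Set.Icc (0 : ℝ) 1) = 1)
    (hGc : Continuous (fun x => cdf Q x))
    (hF : StrictMonoOn (fun x => cdf P x) (Set.Icc (0 : ℝ) 1))
    -- star-shaped transform order `X ≤_* Y`:
    (hstar : ∀ α ∈ Set.Icc (0 : ℝ) 1, ∀ x ∈ Set.Icc (0 : ℝ) 1,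
      Function.invFun (fun y => cdf Q y) (cdf P (α * x)) ≤
        α * Function.invFun (fun y => cdf Q y) (cdf P x)) :
    ∀ x : ℝ, cdf P x ≤ cdf Q x := by
  have hQ0 : cdf Q (-1) = 0 := cdf_eq_zero_of_lt_of_measure_Icc_eq_one hQI (by norm_num)
  have hQ1 : cdf Q 1 = 1 := cdf_eq_one_of_le_of_measure_Icc_eq_one hQI le_rfl
  have hGφ : ∀ x, cdf Q (Function.invFun (fun y => cdf Q y) (cdf P x)) = cdf P x := fun x =>
    Function.invFun_eq <| intermediate_value_univ (-1) 1 hGc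
      (by rw [hQ0, hQ1]; exact ⟨cdf_nonneg P x, cdf_le_one P x⟩)
  have hφ_le_one : ∀ x ∈ Ico (0 : ℝ) 1, Function.invFun (fun y => cdf Q y) (cdf P x) ≤ 1 := by
    intro x hx
    refine ((monotone_cdf Q).reflect_lt ?_).le
    rw [hGφ, hQ1]
    exact (hF (Ico_subset_Icc_self hx) (right_mem_Icc.2 zero_le_one) hx.2).trans_le (cdf_le_one P 1)
  intro t
  rcases lt_or_ge t 0 with ht0 | ht0
  · rw [cdf_eq_zero_of_lt_of_measure_Icc_eq_one hPI ht0]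
    exact cdf_nonneg Q t
  rcases le_or_gt 1 t with ht1 | ht1
  · rw [cdf_eq_one_of_le_of_measure_Icc_eq_one hQI ht1]
    exact cdf_le_one P t
  rw [← hGφ t]
  exact monotone_cdf Q (le_self_of_starShaped_of_le_one hstar hφ_le_one ⟨ht0, ht1⟩)

/-- Proposition 15: for distributions on `[0,1]`, the star-shaped transform order
`X ≤_* Y` implies stochastic dominance `Y ≤_st X`. -/
theorem star_order_implies_stochastic_dominance
    (P Q : Measure ℝ) [IsProbabilityMeasure P] [IsProbabilityMeasure Q]
    (hPI : P (Set.Icc (0 : ℝ) 1) = 1) (hQI : Q (Set.Icc (0 : ℝ) 1) = 1)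
    (hFc : Continuous (fun x => cdf P x)) (hGc : Continuous (fun x => cdf Q x))
    (hF : StrictMonoOn (fun x => cdf P x) (Set.Icc (0 : ℝ) 1))
    (hG : StrictMonoOn (fun x => cdf Q x) (Set.Icc (0 : ℝ) 1))
    -- star-shaped transform order `X ≤_* Y`:
    (hstar : ∀ α ∈ Set.Icc (0 : ℝ) 1, ∀ x ∈ Set.Icc (0 : ℝ) 1,
      Function.invFun (fun y => cdf Q y) (cdf P (α * x)) ≤
        α * Function.invFun (fun y => cdf Q y) (cdf P x)) :
    ∀ x : ℝ, cdf P x ≤ cdf Q x :=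
  star_order_implies_stochastic_dominance_general P Q hPI hQI hGc hF hstar
end
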